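/- arXiv:2308.04565 — 7 statements merged into one kernel-verified Lean document; each statement's English description precedes it below -/
import Mathlib

section
/- Fix α ∈ (0,1), κ > 0, and η > 0. Then there exists a natural number J₀, depending only on α, κ, and η, such that for every nonincreasing sequence (a_i)_{i∈ℕ} of nonnegative real numbers with ∑_{i∈ℕ} a_i = 1 and such that the sequence (a_i^α) is summable with ∑_{i∈ℕ} a_i^α ≤ κ, one has ∑_{i=0}^{J₀-1} a_i ≥ 1 − η. -/
/-!
Monotonicity and `∑ aᵢ ≤ 1` give `aᵢ ≤ 1/(i+1)`, so every term of the tail beyond `J` satisfies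
`aᵢ = aᵢ^α · aᵢ^(1-α) ≤ aᵢ^α · (1/(J+1))^(1-α)`. Summing, the tail is at most
`κ · (1/(J+1))^(1-α)`, which tends to `0` because `α < 1`.
-/

open Filter Topology

lemma Antitone.le_tsum_div_succ {a : ℕ → ℝ} (hanti : Antitone a) (ha : ∀ i, 0 ≤ a i)
    (hs : Summable a) (n : ℕ) : a n ≤ (∑' i, a i) / (n + 1) := by
  have hsum : ((n : ℝ) + 1) * a n ≤ ∑ i ∈ Finset.range (n + 1), a i := by
    simpa using Finset.card_nsmul_le_sum (Finset.range (n + 1)) a (a n)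
      fun i hi => hanti (Nat.lt_succ_iff.mp (Finset.mem_range.mp hi))
  rw [le_div_iff₀ (by positivity), mul_comm]
  exact hsum.trans (hs.sum_le_tsum _ fun i _ => ha i)

lemma Real.le_rpow_mul_rpow_one_sub {x c α : ℝ} (hx : 0 ≤ x) (hxc : x ≤ c) (hα : α ≤ 1) :
    x ≤ x ^ α * c ^ (1 - α) := calc
  x = x ^ α * x ^ (1 - α) := by rw [← Real.rpow_add' hx (by norm_num), add_sub_cancel, Real.rpow_one]
  _ ≤ x ^ α * c ^ (1 - α) := by gcongr

lemma Antitone.tsum_nat_add_le_rpow {a : ℕ → ℝ} {α : ℝ} (hanti : Antitone a) (ha : ∀ i, 0 ≤ a i)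
    (hα : α ≤ 1) (hs : Summable a) (hsα : Summable fun i => a i ^ α) (n : ℕ) :
    ∑' i, a (i + n) ≤ ((∑' i, a i) / (n + 1)) ^ (1 - α) * ∑' i, a i ^ α := by
  have hterm (i : ℕ) : a (i + n) ≤ a (i + n) ^ α * ((∑' i, a i) / (n + 1)) ^ (1 - α) :=
    Real.le_rpow_mul_rpow_one_sub (ha _) ((hanti (Nat.le_add_left n i)).trans
      (hanti.le_tsum_div_succ ha hs n)) hα
  have htailα : ∑' i, a (i + n) ^ α ≤ ∑' i, a i ^ α := by
    rw [← hsα.sum_add_tsum_nat_add n, le_add_iff_nonneg_left]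
    exact Finset.sum_nonneg fun i _ => Real.rpow_nonneg (ha i) α
  have hsαn : Summable fun i => a (i + n) ^ α := (summable_nat_add_iff n).2 hsα
  calc ∑' i, a (i + n)
      ≤ ∑' i, a (i + n) ^ α * ((∑' i, a i) / (n + 1)) ^ (1 - α) :=
        Summable.tsum_le_tsum hterm ((summable_nat_add_iff n).2 hs) (hsαn.mul_right _)
    _ = ((∑' i, a i) / (n + 1)) ^ (1 - α) * ∑' i, a (i + n) ^ α := by rw [tsum_mul_right, mul_comm]
    _ ≤ ((∑' i, a i) / (n + 1)) ^ (1 - α) * ∑' i, a i ^ α := by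
        gcongr
        exact Real.rpow_nonneg (div_nonneg (tsum_nonneg ha) (by positivity)) _

theorem stmt_0_general (α κ η : ℝ) (hα₁ : α < 1) (hη : 0 < η) :
    ∃ J₀ : ℕ, ∀ a : ℕ → ℝ,
      (∀ i, 0 ≤ a i) →
      (∀ i j, i ≤ j → a j ≤ a i) →
      Summable a →
      (∑' i, a i) = 1 →
      Summable (fun i => a i ^ α) →
      (∑' i, a i ^ α) ≤ κ →
      1 - η ≤ ∑ i ∈ Finset.range J₀, a i := by
  have hlim : Tendsto (fun n : ℕ => (1 / ((n : ℝ) + 1)) ^ (1 - α) * κ) atTop (𝓝 0) := by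
    simpa [Real.zero_rpow (sub_pos.2 hα₁).ne'] using
      (tendsto_one_div_add_atTop_nhds_zero_nat.rpow_const (Or.inr (sub_pos.2 hα₁).le)).mul_const κ
  obtain ⟨J₀, hJ₀⟩ := (hlim.eventually (gt_mem_nhds hη)).exists
  refine ⟨J₀, fun a ha hanti hs hsum hsα hκ => ?_⟩
  have htail : ∑' i, a (i + J₀) ≤ η := calc
    ∑' i, a (i + J₀) ≤ (1 / ((J₀ : ℝ) + 1)) ^ (1 - α) * ∑' i, a i ^ α := by
      simpa [hsum] using Antitone.tsum_nat_add_le_rpow hanti ha hα₁.le hs hsα J₀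
    _ ≤ (1 / ((J₀ : ℝ) + 1)) ^ (1 - α) * κ := by gcongr
    _ ≤ η := hJ₀.le
  linarith [hs.sum_add_tsum_nat_add J₀]

/-- Lemma 5.1 ("concavity lemma"): for `α ∈ (0,1)`, `κ > 0`, `η > 0` there is `J₀ ∈ ℕ`
such that every nonincreasing sequence of nonnegative reals summing to `1`, with
`∑ a_i^α ≤ κ`, satisfies `∑_{i<J₀} a_i ≥ 1 - η`. -/
theorem stmt_0 (α κ η : ℝ) (hα₀ : 0 < α) (hα₁ : α < 1) (hκ : 0 < κ) (hη : 0 < η) :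
    ∃ J₀ : ℕ, ∀ a : ℕ → ℝ,
      (∀ i, 0 ≤ a i) →
      (∀ i j, i ≤ j → a j ≤ a i) →
      Summable a →
      (∑' i, a i) = 1 →
      Summable (fun i => a i ^ α) →
      (∑' i, a i ^ α) ≤ κ →
      1 - η ≤ ∑ i ∈ Finset.range J₀, a i :=
  stmt_0_general α κ η hα₁ hη
end

section
/- Let n ≥ 1, let δ > 0, R > 0, let x₁, …, x_J be finitely many points of ℝⁿ, and let Ω ⊆ ℝⁿ be a Lebesgue-measurable set such that the Lebesgue measure of Ω \ ⋃_{i=1}^{J} B(x_i, R) is strictly less than ω_n δⁿ. Then Ω \ ⋃_{i=1}^{J} B(x_i, R+δ) ⊆ {x ∈ ℝⁿ : dist(x, ∂Ω) < δ}, where ∂Ω denotes the topological boundary (frontier) of Ω. -/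
/-!
If a point `y ∈ Ω` outside the enlarged balls were at distance `≥ δ` from `∂Ω`, the ball
`B(y, δ)` would be a connected set meeting `Ω` and missing `∂Ω`, hence it would lie in `Ω`;
it also misses every `B(xᵢ, R)`. Its volume `ωₙ δⁿ` would then be at most that of
`Ω \ ⋃ B(xᵢ, R)`, contradicting the hypothesis.
-/

open MeasureTheory Metric

theorem IsPreconnected.subset_interior_of_disjoint_frontier {X : Type*} [TopologicalSpace X]
    {s t : Set X} (ht : IsPreconnected t) (hts : (t ∩ s).Nonempty)
    (hdisj : Disjoint t (frontier s)) : t ⊆ interior s := by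
  have hcover : t ⊆ interior s ∪ (closure s)ᶜ := fun z hz => by
    by_cases hzs : z ∈ closure s
    · exact Or.inl (by_contra fun hzi => hdisj.notMem_of_mem_left hz ⟨hzs, hzi⟩)
    · exact Or.inr hzs
  obtain ⟨y, hyt, hys⟩ := hts
  have hyint : y ∈ interior s := (hcover hyt).resolve_right (not_not.2 (subset_closure hys))
  exact ht.subset_left_of_subset_union isOpen_interior isClosed_closure.isOpen_compl
    (disjoint_compl_right.mono_left (interior_subset.trans subset_closure)) hcover ⟨y, hyt, hyint⟩

theorem Metric.disjoint_ball_of_le_infDist {X : Type*} [PseudoMetricSpace X] {y : X}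
    {s : Set X} {δ : ℝ} (h : δ ≤ infDist y s) : Disjoint (ball y δ) s :=
  disjoint_ball_infDist.mono_left (ball_subset_ball h)

theorem Metric.ball_subset_compl_iUnion_ball {X ι : Type*} [PseudoMetricSpace X] {x : ι → X}
    {y : X} {R δ : ℝ} (hy : y ∉ ⋃ i, ball (x i) (R + δ)) :
    ball y δ ⊆ (⋃ i, ball (x i) R)ᶜ := by
  simp only [Set.subset_compl_iff_disjoint_right, Set.disjoint_iUnion_right]
  intro i
  refine ball_disjoint_ball ?_
  have hfar : ¬ dist y (x i) < R + δ := fun h => hy (Set.mem_iUnion.2 ⟨i, mem_ball.2 h⟩)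
  linarith

theorem stmt_2_general (n : ℕ) (δ R : ℝ) (hδ : 0 < δ)
    (J : ℕ) (x : Fin J → EuclideanSpace ℝ (Fin n))
    (Ω : Set (EuclideanSpace ℝ (Fin n)))
    (hvol : volume (Ω \ ⋃ i, ball (x i) R)
      < volume (ball (0 : EuclideanSpace ℝ (Fin n)) 1) * ENNReal.ofReal (δ ^ n)) :
    Ω \ (⋃ i, ball (x i) (R + δ)) ⊆ {y | infDist y (frontier Ω) < δ} := by
  rintro y ⟨hyΩ, hyfar⟩
  by_contra hnear
  have hfrontier : δ ≤ infDist y (frontier Ω) := not_lt.1 hnear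
  have hballΩ : ball y δ ⊆ Ω :=
    ((convex_ball y δ).isPreconnected.subset_interior_of_disjoint_frontier
      ⟨y, mem_ball_self hδ, hyΩ⟩ (disjoint_ball_of_le_infDist hfrontier)).trans interior_subset
  have hball : ball y δ ⊆ Ω \ ⋃ i, ball (x i) R :=
    Set.subset_inter hballΩ (ball_subset_compl_iUnion_ball hyfar)
  have hvol_ball : volume (ball y δ)
      = volume (ball (0 : EuclideanSpace ℝ (Fin n)) 1) * ENNReal.ofReal (δ ^ n) := by
    rw [Measure.addHaar_ball_of_pos volume y hδ, finrank_euclideanSpace_fin, mul_comm]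
  exact (hvol_ball ▸ measure_mono hball).not_gt hvol

/-- Euclidean case of Lemma 4.5 (containment lemma): if the volume of `Ω` outside the
union of balls `B(xᵢ, R)` is less than `ωₙ δⁿ`, then every point of `Ω` outside the
enlarged balls `B(xᵢ, R + δ)` lies within distance `δ` of the boundary of `Ω`. -/
theorem stmt_2 (n : ℕ) (hn : 1 ≤ n) (δ R : ℝ) (hδ : 0 < δ) (hR : 0 < R)
    (J : ℕ) (x : Fin J → EuclideanSpace ℝ (Fin n))
    (Ω : Set (EuclideanSpace ℝ (Fin n))) (hΩ : MeasurableSet Ω)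
    (hvol : volume (Ω \ ⋃ i, ball (x i) R)
      < volume (ball (0 : EuclideanSpace ℝ (Fin n)) 1) * ENNReal.ofReal (δ ^ n)) :
    Ω \ (⋃ i, ball (x i) (R + δ)) ⊆ {y | infDist y (frontier Ω) < δ} :=
  stmt_2_general n δ R hδ J x Ω hvol
end

section
/- Let n ≥ 1, c₀ ∈ (0,1), r₀ > 0, and R₀ > 0. Let E and E_i (i ∈ ℕ) be Lebesgue-measurable subsets of the closed ball of radius R₀ centered at the origin in ℝⁿ, each having nonempty topological boundary, and suppose: (i) the Lebesgue measure of the symmetric difference E_i Δ E tends to 0 as i → ∞; (ii) for every i, every x ∈ ∂E_i, and every r ∈ (0, r₀), one has c₀ ω_n rⁿ ≤ |E_i ∩ B(x,r)| ≤ (1 − c₀) ω_n rⁿ; (iii) for every x ∈ ∂E and every r > 0, one has 0 < |E ∩ B(x,r)| < |B(x,r)|. Then the Hausdorff distance between ∂E_i and ∂E tends to 0 as i → ∞. -/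
/-!
If a point `x ∈ ∂Eᵢ` were at distance at least `δ` from `∂E`, the ball `B(x, δ)` would lie on
one side of `E`, while the density bounds put volume `c₀ ω δⁿ` of that ball on each side of `Eᵢ`;
hence `|Eᵢ Δ E| ≥ c₀ ω δⁿ`, which fails for large `i`. Conversely, around each point of `∂E` the
set `E` has positive volume on both sides at every scale, and compactness of `∂E` makes the
resulting bound on `|Eᵢ Δ E|` uniform.
-/

open MeasureTheory Metric Filter Set
open scoped ENNReal Topology

lemma IsPreconnected.subset_or_subset_compl_of_disjoint_frontier {X : Type*}
    [TopologicalSpace X] {T U : Set X} (hU : IsPreconnected U)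
    (hUT : Disjoint U (frontier T)) : U ⊆ T ∨ U ⊆ Tᶜ := by
  have hcover : U ⊆ interior T ∪ interior Tᶜ := by
    rw [← compl_frontier_eq_union_interior]
    exact hUT.subset_compl_right
  refine (hU.subset_or_subset isOpen_interior isOpen_interior ?_ hcover).imp
    (·.trans interior_subset) (·.trans interior_subset)
  exact disjoint_compl_right.mono interior_subset interior_subset

section Measure

variable {X : Type*} [MeasurableSpace X] {μ : Measure X}

lemma min_measure_inter_sdiff_le_measure_symmDiff [TopologicalSpace X] {S T U : Set X}
    (hU : IsPreconnected U) (hUT : Disjoint U (frontier T)) :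
    min (μ (S ∩ U)) (μ (U \ S)) ≤ μ (symmDiff S T) := by
  rcases hU.subset_or_subset_compl_of_disjoint_frontier hUT with hT | hT
  · refine (min_le_right _ _).trans (measure_mono ?_)
    exact fun y hy => Or.inr ⟨hT hy.1, hy.2⟩
  · refine (min_le_left _ _).trans (measure_mono ?_)
    exact fun y hy => Or.inl ⟨hy.1, hT hy.2⟩

lemma pos_measure_sdiff_of_measure_inter_lt {S B : Set X} (h : μ (S ∩ B) < μ B) :
    0 < μ (B \ S) := by
  refine pos_iff_ne_zero.2 fun h0 => h.not_ge ?_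
  simpa [h0, inter_comm] using measure_le_inter_add_sdiff μ B S

lemma ofReal_le_measure_inter_and_sdiff {S B : Set X} {v c : ℝ} (hB : μ B = ENNReal.ofReal v)
    (hlower : c * v ≤ (μ (S ∩ B)).toReal) (hupper : (μ (S ∩ B)).toReal ≤ (1 - c) * v) :
    ENNReal.ofReal (c * v) ≤ μ (S ∩ B) ∧ ENNReal.ofReal (c * v) ≤ μ (B \ S) := by
  refine ⟨ENNReal.ofReal_le_of_le_toReal hlower, ?_⟩
  have hfin : μ (S ∩ B) ≠ ∞ :=
    ne_top_of_le_ne_top (hB ▸ ENNReal.ofReal_ne_top) (measure_mono inter_subset_right)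
  calc ENNReal.ofReal (c * v)
      ≤ ENNReal.ofReal (v - (μ (S ∩ B)).toReal) := ENNReal.ofReal_le_ofReal (by linarith)
    _ = μ B - μ (S ∩ B) := by
      rw [ENNReal.ofReal_sub _ ENNReal.toReal_nonneg, ENNReal.ofReal_toReal hfin, hB]
    _ ≤ μ (B \ (S ∩ B)) := le_measure_sdiff
    _ = μ (B \ S) := by rw [sdiff_inter_self_eq_sdiff]

end Measure

section NormedSpace

variable {V : Type*} [NormedAddCommGroup V] [NormedSpace ℝ V] [MeasurableSpace V]
  {μ : Measure V}

lemma infDist_frontier_lt_of_measure_symmDiff_lt {S T : Set V} {x : V} {r : ℝ}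
    (h : μ (symmDiff S T) < min (μ (S ∩ ball x r)) (μ (ball x r \ S))) :
    infDist x (frontier T) < r := by
  by_contra! hr
  have hdisj : Disjoint (ball x r) (frontier T) :=
    disjoint_ball_infDist.mono_left (ball_subset_ball hr)
  exact h.not_ge
    (min_measure_inter_sdiff_le_measure_symmDiff (convex_ball x r).isPreconnected hdisj)

variable {ι : Type*} {l : Filter ι} {S : Set V} {T : ι → Set V}

lemma eventually_forall_infDist_frontier_lt_of_uniform_density {r : ℝ} {a : ℝ≥0∞} (ha : 0 < a)
    (hT : ∀ i, ∀ x ∈ frontier (T i), a ≤ μ (T i ∩ ball x r) ∧ a ≤ μ (ball x r \ T i))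
    (hTS : Tendsto (fun i => μ (symmDiff (T i) S)) l (𝓝 0)) :
    ∀ᶠ i in l, ∀ x ∈ frontier (T i), infDist x (frontier S) < r := by
  filter_upwards [hTS.eventually_lt_const ha] with i hi x hx
  exact infDist_frontier_lt_of_measure_symmDiff_lt (hi.trans_le (le_min_iff.2 (hT i x hx)))

lemma eventually_forall_infDist_frontier_lt_of_isCompact {K : Set V} (hK : IsCompact K)
    (hS : ∀ y ∈ K, ∀ r > 0, 0 < μ (S ∩ ball y r) ∧ 0 < μ (ball y r \ S))
    (hTS : Tendsto (fun i => μ (symmDiff (T i) S)) l (𝓝 0)) {ε : ℝ} (hε : 0 < ε) :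
    ∀ᶠ i in l, ∀ x ∈ K, infDist x (frontier (T i)) < ε := by
  obtain ⟨t, htK, hcover⟩ :=
    hK.elim_nhds_subcover (fun y => ball y (ε / 2)) fun y _ => ball_mem_nhds y (half_pos hε)
  have hcenters : ∀ᶠ i in l, ∀ y ∈ t, infDist y (frontier (T i)) < ε / 2 := by
    refine (eventually_all_finset t).2 fun y hy => ?_
    obtain ⟨hin, hout⟩ := hS y (htK y hy) (ε / 2) (half_pos hε)
    filter_upwards [hTS.eventually_lt_const (lt_min hin hout)] with i hi
    exact infDist_frontier_lt_of_measure_symmDiff_lt (symmDiff_comm (T i) S ▸ hi)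
  filter_upwards [hcenters] with i hi x hx
  obtain ⟨y, hy, hxy⟩ := mem_iUnion₂.1 (hcover hx)
  calc infDist x (frontier (T i)) ≤ infDist y (frontier (T i)) + dist x y :=
        infDist_le_infDist_add_dist
    _ < ε / 2 + ε / 2 := add_lt_add (hi y hy) (mem_ball.1 hxy)
    _ = ε := add_halves ε

end NormedSpace

lemma tendsto_hausdorffDist_zero_of_forall_infDist_lt {X ι : Type*} [PseudoMetricSpace X]
    {l : Filter ι} {s t : ι → Set X}
    (h : ∀ ε > 0, ∀ᶠ i in l,
      (∀ x ∈ s i, infDist x (t i) < ε) ∧ ∀ x ∈ t i, infDist x (s i) < ε) :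
    Tendsto (fun i => hausdorffDist (s i) (t i)) l (𝓝 0) := by
  refine tendsto_order.2 ⟨fun a ha => .of_forall fun i => ha.trans_le hausdorffDist_nonneg,
    fun ε hε => ?_⟩
  filter_upwards [h (ε / 2) (half_pos hε)] with i ⟨hst, hts⟩
  exact (hausdorffDist_le_of_infDist (half_pos hε).le (fun x hx => (hst x hx).le)
    fun x hx => (hts x hx).le).trans_lt (half_lt_self hε)

theorem stmt_4_general (n : ℕ) (c₀ r₀ R₀ : ℝ)
    (hc₀ : 0 < c₀) (hr₀ : 0 < r₀)
    (E : Set (EuclideanSpace ℝ (Fin n))) (Ei : ℕ → Set (EuclideanSpace ℝ (Fin n)))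
    (hEsub : E ⊆ closedBall (0 : EuclideanSpace ℝ (Fin n)) R₀)
    (hL1 : Tendsto (fun i => volume (symmDiff (Ei i) E)) atTop (nhds 0))
    (hdens : ∀ i, ∀ x ∈ frontier (Ei i), ∀ r : ℝ, 0 < r → r < r₀ →
      c₀ * (volume (ball (0 : EuclideanSpace ℝ (Fin n)) 1)).toReal * r ^ n
          ≤ (volume (Ei i ∩ ball x r)).toReal ∧
      (volume (Ei i ∩ ball x r)).toReal
          ≤ (1 - c₀) * (volume (ball (0 : EuclideanSpace ℝ (Fin n)) 1)).toReal * r ^ n)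
    (hEdens : ∀ x ∈ frontier E, ∀ r : ℝ, 0 < r →
      0 < volume (E ∩ ball x r) ∧ volume (E ∩ ball x r) < volume (ball x r)) :
    Tendsto (fun i => hausdorffDist (frontier (Ei i)) (frontier E)) atTop (nhds 0) := by
  set ω := (volume (ball (0 : EuclideanSpace ℝ (Fin n)) 1)).toReal
  have hω : 0 < ω :=
    ENNReal.toReal_pos (measure_ball_pos volume 0 one_pos).ne' measure_ball_lt_top.ne
  have hvol : ∀ (x : EuclideanSpace ℝ (Fin n)) (r : ℝ), 0 < r →
      volume (ball x r) = ENNReal.ofReal (ω * r ^ n) := fun x r hr => by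
    rw [Measure.addHaar_ball_of_pos volume x hr, finrank_euclideanSpace_fin, mul_comm,
      ENNReal.ofReal_mul hω.le, ENNReal.ofReal_toReal measure_ball_lt_top.ne]
  have hfrontier : IsCompact (frontier E) :=
    (isCompact_closedBall 0 R₀).of_isClosed_subset isClosed_frontier
      (frontier_subset_closure.trans (closure_minimal hEsub isClosed_closedBall))
  have hmass : ∀ y ∈ frontier E, ∀ r > 0,
      0 < volume (E ∩ ball y r) ∧ 0 < volume (ball y r \ E) :=
    fun y hy r hr => (hEdens y hy r hr).imp_right pos_measure_sdiff_of_measure_inter_lt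
  refine tendsto_hausdorffDist_zero_of_forall_infDist_lt fun ε hε => ?_
  set δ := min ε (r₀ / 2)
  have hδ : 0 < δ := lt_min hε (half_pos hr₀)
  have hdensδ : ∀ i, ∀ x ∈ frontier (Ei i),
      ENNReal.ofReal (c₀ * (ω * δ ^ n)) ≤ volume (Ei i ∩ ball x δ) ∧
        ENNReal.ofReal (c₀ * (ω * δ ^ n)) ≤ volume (ball x δ \ Ei i) := fun i x hx => by
    obtain ⟨hlower, hupper⟩ :=
      hdens i x hx δ hδ ((min_le_right _ _).trans_lt (half_lt_self hr₀))
    exact ofReal_le_measure_inter_and_sdiff (hvol x δ hδ) (by linarith) (by linarith)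
  filter_upwards [eventually_forall_infDist_frontier_lt_of_uniform_density
      (ENNReal.ofReal_pos.2 (by positivity)) hdensδ hL1,
    eventually_forall_infDist_frontier_lt_of_isCompact hfrontier hmass hL1 hε] with i hi hi'
  exact ⟨fun x hx => (hi x hx).trans_le (min_le_left _ _), hi'⟩

/-- Step 3 of the proof of Theorem 5.3: uniform volume density estimates upgrade `L¹`
convergence of sets to Hausdorff convergence of their boundaries. -/
theorem stmt_4 (n : ℕ) (hn : 1 ≤ n) (c₀ r₀ R₀ : ℝ)
    (hc₀ : 0 < c₀) (hc₀' : c₀ < 1) (hr₀ : 0 < r₀) (hR₀ : 0 < R₀)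
    (E : Set (EuclideanSpace ℝ (Fin n))) (Ei : ℕ → Set (EuclideanSpace ℝ (Fin n)))
    (hEsub : E ⊆ closedBall (0 : EuclideanSpace ℝ (Fin n)) R₀)
    (hEisub : ∀ i, Ei i ⊆ closedBall (0 : EuclideanSpace ℝ (Fin n)) R₀)
    (hEmeas : MeasurableSet E) (hEimeas : ∀ i, MeasurableSet (Ei i))
    (hfrE : (frontier E).Nonempty) (hfrEi : ∀ i, (frontier (Ei i)).Nonempty)
    (hL1 : Tendsto (fun i => volume (symmDiff (Ei i) E)) atTop (nhds 0))
    (hdens : ∀ i, ∀ x ∈ frontier (Ei i), ∀ r : ℝ, 0 < r → r < r₀ →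
      c₀ * (volume (ball (0 : EuclideanSpace ℝ (Fin n)) 1)).toReal * r ^ n
          ≤ (volume (Ei i ∩ ball x r)).toReal ∧
      (volume (Ei i ∩ ball x r)).toReal
          ≤ (1 - c₀) * (volume (ball (0 : EuclideanSpace ℝ (Fin n)) 1)).toReal * r ^ n)
    (hEdens : ∀ x ∈ frontier E, ∀ r : ℝ, 0 < r →
      0 < volume (E ∩ ball x r) ∧ volume (E ∩ ball x r) < volume (ball x r)) :
    Tendsto (fun i => hausdorffDist (frontier (Ei i)) (frontier E)) atTop (nhds 0) :=
  stmt_4_general n c₀ r₀ R₀ hc₀ hr₀ E Ei hEsub hL1 hdens hEdens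
end

section
/- Let n ∈ ℕ with n ≥ 2 and let v₁, v₂, α₁, α₂ be positive real numbers satisfying α₁ v₂ = α₂ v₁. Define, for real t in a neighborhood of 0, g(t) = (1 − ((1+t)^n − 1)(v₁/v₂))^{1/n} and f(t) = α₁ (1+t)^{n−1} + α₂ g(t)^{n−1}. Then f is twice differentiable at 0 with f''(0) = −(n−1) α₁ (1 + v₁/v₂), and in particular f''(0) < 0. -/
/-!
Near `0` the base `u(t) = 1 - ((1+t)^n - 1)ρ` of the root is positive, so with `ρ = v₁/v₂`
`f(t) = α₁(1+t)^(n-1) + α₂ u(t)^((n-1)/n)` and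
`f'(t) = (n-1)(α₁(1+t)^(n-2) - α₂ρ(1+t)^(n-1)/g(t))`.
Differentiating once more at `0`, where `g(0) = 1` and `g'(0) = -ρ`, gives
`f''(0) = (n-1)(α₁(n-2) - α₂ρ(n-1+ρ))`, and the criticality condition `α₂ρ = α₁`
turns this into `-(n-1)α₁(1+ρ)`.
-/

/-- The volume-preserving dilation factor `g(t) = (1 - ((1+t)^n - 1)·(v₁/v₂))^(1/n)`. -/
noncomputable def gfun (n : ℕ) (ρ : ℝ) (t : ℝ) : ℝ :=
  (1 - ((1 + t) ^ n - 1) * ρ) ^ ((1 : ℝ) / n)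

/-- The energy `f(t) = α₁ (1+t)^(n-1) + α₂ g(t)^(n-1)` of the dilated competitor. -/
noncomputable def ffun (n : ℕ) (v₁ v₂ α₁ α₂ : ℝ) (t : ℝ) : ℝ :=
  α₁ * (1 + t) ^ (n - 1) + α₂ * (gfun n (v₁ / v₂) t) ^ (n - 1)

open Filter Topology

noncomputable def gfunBase (n : ℕ) (ρ t : ℝ) : ℝ := 1 - ((1 + t) ^ n - 1) * ρ

lemma gfun_eq (n : ℕ) (ρ t : ℝ) : gfun n ρ t = gfunBase n ρ t ^ ((1 : ℝ) / n) := rfl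

@[simp] lemma gfunBase_zero (n : ℕ) (ρ : ℝ) : gfunBase n ρ 0 = 1 := by simp [gfunBase]

@[simp] lemma gfun_zero (n : ℕ) (ρ : ℝ) : gfun n ρ 0 = 1 := by simp [gfun_eq]

lemma continuous_gfunBase (n : ℕ) (ρ : ℝ) : Continuous (gfunBase n ρ) := by
  unfold gfunBase; fun_prop

lemma eventually_gfunBase_pos {n : ℕ} {ρ t : ℝ} (ht : 0 < gfunBase n ρ t) :
    ∀ᶠ s in 𝓝 t, 0 < gfunBase n ρ s :=
  continuousAt_const.eventually_lt (continuous_gfunBase n ρ).continuousAt ht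

lemma hasDerivAt_gfunBase (n : ℕ) (ρ t : ℝ) :
    HasDerivAt (gfunBase n ρ) (-(n * (1 + t) ^ (n - 1) * ρ)) t := by
  unfold gfunBase
  simpa using ((((hasDerivAt_id t).const_add 1).pow n).sub_const 1).mul_const ρ |>.const_sub 1

lemma hasDerivAt_gfun_zero {n : ℕ} (hn : n ≠ 0) (ρ : ℝ) : HasDerivAt (gfun n ρ) (-ρ) 0 := by
  have h := (hasDerivAt_gfunBase n ρ 0).rpow_const (p := 1 / n) (Or.inl (by simp))
  rw [gfunBase_zero, Real.one_rpow] at h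
  exact h.congr_deriv (by field_simp; simp)

lemma gfun_pow_pred {n : ℕ} (hn : 1 ≤ n) {ρ t : ℝ} (ht : 0 ≤ gfunBase n ρ t) :
    gfun n ρ t ^ (n - 1) = gfunBase n ρ t ^ (((n : ℝ) - 1) / n) := by
  rw [gfun_eq, ← Real.rpow_natCast, ← Real.rpow_mul ht, Nat.cast_sub hn, Nat.cast_one]
  congr 1
  field_simp

lemma hasDerivAt_ffun {n : ℕ} (hn : 1 ≤ n) (v₁ v₂ α₁ α₂ : ℝ) {t : ℝ}
    (ht : 0 < gfunBase n (v₁ / v₂) t) :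
    HasDerivAt (ffun n v₁ v₂ α₁ α₂) (((n : ℝ) - 1) *
      (α₁ * (1 + t) ^ (n - 2) - α₂ * (v₁ / v₂) * (1 + t) ^ (n - 1) * (gfun n (v₁ / v₂) t)⁻¹)) t := by
  set ρ := v₁ / v₂
  have h1 : HasDerivAt (fun s : ℝ => 1 + s) 1 t := (hasDerivAt_id t).const_add 1
  have h := ((h1.pow (n - 1)).const_mul α₁).add
    (((hasDerivAt_gfunBase n ρ t).rpow_const (p := ((n : ℝ) - 1) / n) (Or.inl ht.ne')).const_mul α₂)
  have hfun : ffun n v₁ v₂ α₁ α₂ =ᶠ[𝓝 t]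
      fun s => α₁ * (1 + s) ^ (n - 1) + α₂ * gfunBase n ρ s ^ (((n : ℝ) - 1) / n) := by
    filter_upwards [eventually_gfunBase_pos ht] with s hs
    rw [ffun, gfun_pow_pred hn hs.le]
  refine (h.congr_of_eventuallyEq hfun).congr_deriv ?_
  have hn0 : (n : ℝ) ≠ 0 := Nat.cast_ne_zero.mpr (by omega)
  have hexp : ((n : ℝ) - 1) / n - 1 = -(1 / n) := by field_simp; ring
  rw [hexp, Real.rpow_neg ht.le, ← gfun_eq, Nat.cast_sub hn, Nat.sub_sub]
  field_simp
  ring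

lemma hasDerivAt_deriv_ffun_zero {n : ℕ} (hn : 2 ≤ n) (v₁ v₂ α₁ α₂ : ℝ) :
    HasDerivAt (deriv (ffun n v₁ v₂ α₁ α₂)) (((n : ℝ) - 1) *
      (α₁ * ((n : ℝ) - 2) - α₂ * (v₁ / v₂) * ((n : ℝ) - 1 + v₁ / v₂))) 0 := by
  set ρ := v₁ / v₂
  have hderiv : deriv (ffun n v₁ v₂ α₁ α₂) =ᶠ[𝓝 0] fun t => ((n : ℝ) - 1) *
      (α₁ * (1 + t) ^ (n - 2) - α₂ * ρ * (1 + t) ^ (n - 1) * (gfun n ρ t)⁻¹) := by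
    filter_upwards [eventually_gfunBase_pos (by simp : 0 < gfunBase n ρ 0)] with t ht
    exact (hasDerivAt_ffun (by omega) v₁ v₂ α₁ α₂ ht).deriv
  have h1 : HasDerivAt (fun s : ℝ => 1 + s) 1 0 := (hasDerivAt_id 0).const_add 1
  have hg := (hasDerivAt_gfun_zero (by omega : n ≠ 0) ρ).inv (by simp)
  have h := (((h1.pow (n - 2)).const_mul α₁).sub
    (((h1.pow (n - 1)).const_mul (α₂ * ρ)).mul hg)).const_mul ((n : ℝ) - 1)
  refine (h.congr_of_eventuallyEq hderiv).congr_deriv ?_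
  simp only [Pi.inv_apply, Pi.pow_apply, gfun_zero, Nat.cast_sub (by omega : 2 ≤ n),
    Nat.cast_sub (by omega : 1 ≤ n), Nat.cast_ofNat, Nat.cast_one, add_zero, one_pow]
  ring

theorem stmt_8_general (n : ℕ) (hn : 2 ≤ n) (v₁ v₂ α₁ α₂ : ℝ)
    (hv₁ : 0 < v₁) (hv₂ : 0 < v₂) (hα₁ : 0 < α₁)
    (hcrit : α₁ * v₂ = α₂ * v₁) :
    HasDerivAt (deriv (ffun n v₁ v₂ α₁ α₂))
      (-(((n : ℝ) - 1) * α₁ * (1 + v₁ / v₂))) 0 ∧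
    -(((n : ℝ) - 1) * α₁ * (1 + v₁ / v₂)) < 0 := by
  have hα : α₂ * (v₁ / v₂) = α₁ := by
    rw [mul_div_assoc', div_eq_iff hv₂.ne', hcrit]
  have hn1 : (1 : ℝ) < n := by exact_mod_cast hn
  refine ⟨?_, neg_lt_zero.mpr (by positivity)⟩
  convert hasDerivAt_deriv_ffun_zero hn v₁ v₂ α₁ α₂ using 1
  rw [hα]
  ring

/-- Second-variation computation from Step 5 of the proof of Theorem 5.3: when
`α₁ v₂ = α₂ v₁`, the energy `f` is twice differentiable at `0` with
`f''(0) = -(n-1)α₁(1 + v₁/v₂) < 0`. -/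
theorem stmt_8 (n : ℕ) (hn : 2 ≤ n) (v₁ v₂ α₁ α₂ : ℝ)
    (hv₁ : 0 < v₁) (hv₂ : 0 < v₂) (hα₁ : 0 < α₁) (hα₂ : 0 < α₂)
    (hcrit : α₁ * v₂ = α₂ * v₁) :
    HasDerivAt (deriv (ffun n v₁ v₂ α₁ α₂))
      (-(((n : ℝ) - 1) * α₁ * (1 + v₁ / v₂))) 0 ∧
    -(((n : ℝ) - 1) * α₁ * (1 + v₁ / v₂)) < 0 :=
  stmt_8_general n hn v₁ v₂ α₁ α₂ hv₁ hv₂ hα₁ hcrit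
end

section
/- Let n ≥ 1 and 0 < a ≤ b, and let F : ℝⁿ × ℝⁿ → ℝ be continuous with a‖z‖ ≤ F(x, z) ≤ b‖z‖ for all x, z ∈ ℝⁿ. Let x₁, x₂ ∈ ℝⁿ and let γ̂ : [0,1] → ℝⁿ be a continuously differentiable curve with γ̂(0) = x₁, γ̂(1) = x₂, and ∫₀¹ F(γ̂(t), γ̂'(t)) dt ≤ 2 d_F(x₁, x₂). Then for every t ∈ [0,1] one has ‖γ̂(t) − x₁‖ ≤ (2b/a) ‖x₂ − x₁‖. -/
/-!
Integrating the lower bound `a‖γ̂'‖ ≤ F` shows that `a‖γ̂(t) - x₁‖` is at most the `F`-length of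
`γ̂`, hence at most `2 d_F(x₁, x₂)`; the straight segment from `x₁` to `x₂`, whose `F`-length is
at most `b‖x₂ - x₁‖`, bounds `d_F(x₁, x₂)`.
-/

/-- The anisotropic distance `d_F(p,q)`: the infimum of `∫₀¹ F(γ(t), γ'(t)) dt` over all
continuously differentiable curves `γ` with `γ 0 = p` and `γ 1 = q`. -/
noncomputable def dF (n : ℕ)
    (F : EuclideanSpace ℝ (Fin n) × EuclideanSpace ℝ (Fin n) → ℝ)
    (p q : EuclideanSpace ℝ (Fin n)) : ℝ :=
  sInf { L : ℝ | ∃ γ : ℝ → EuclideanSpace ℝ (Fin n), ContDiff ℝ 1 γ ∧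
    γ 0 = p ∧ γ 1 = q ∧ L = ∫ t in (0:ℝ)..1, F (γ t, deriv γ t) }

open Set

theorem mul_norm_sub_le_integral {E : Type*} [NormedAddCommGroup E] [NormedSpace ℝ E]
    {F : E × E → ℝ} {a : ℝ} (ha : 0 < a) (hFcont : Continuous F)
    (hFa : ∀ x z : E, a * ‖z‖ ≤ F (x, z)) {γ : ℝ → E} (hγ : ContDiff ℝ 1 γ)
    {t : ℝ} (ht : t ∈ Icc (0 : ℝ) 1) :
    a * ‖γ t - γ 0‖ ≤ ∫ s in (0 : ℝ)..1, F (γ s, deriv γ s) := by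
  have hG : Continuous fun s => F (γ s, deriv γ s) :=
    hFcont.comp (hγ.continuous.prodMk (hγ.continuous_deriv le_rfl))
  have hG0 : ∀ s, 0 ≤ F (γ s, deriv γ s) := fun s =>
    (mul_nonneg ha.le (norm_nonneg _)).trans (hFa _ _)
  have hspeed : ‖γ t - γ 0‖ ≤ ∫ s in (0 : ℝ)..t, F (γ s, deriv γ s) / a :=
    norm_sub_le_integral_of_norm_deriv_le_of_le ht.1 hγ.continuous.continuousOn
      (hγ.differentiable one_ne_zero).differentiableOn
      (.of_forall fun s _ => (le_div_iff₀' ha).2 (hFa _ _))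
      ((hG.div_const a).intervalIntegrable _ _)
  calc a * ‖γ t - γ 0‖ ≤ a * ∫ s in (0 : ℝ)..t, F (γ s, deriv γ s) / a := by gcongr
    _ = ∫ s in (0 : ℝ)..t, F (γ s, deriv γ s) := by
      rw [intervalIntegral.integral_div]
      field_simp
    _ ≤ ∫ s in (0 : ℝ)..1, F (γ s, deriv γ s) :=
      intervalIntegral.integral_mono_interval le_rfl ht.1 ht.2 (.of_forall hG0)
        (hG.intervalIntegrable _ _)

section dF

variable {n : ℕ} {F : EuclideanSpace ℝ (Fin n) × EuclideanSpace ℝ (Fin n) → ℝ}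

theorem dF_le_integral (hF0 : ∀ x z, 0 ≤ F (x, z)) {γ : ℝ → EuclideanSpace ℝ (Fin n)}
    (hγ : ContDiff ℝ 1 γ) : dF n F (γ 0) (γ 1) ≤ ∫ t in (0 : ℝ)..1, F (γ t, deriv γ t) := by
  refine csInf_le ⟨0, ?_⟩ ⟨γ, hγ, rfl, rfl, rfl⟩
  rintro L ⟨g, -, -, -, rfl⟩
  exact intervalIntegral.integral_nonneg zero_le_one fun s _ => hF0 _ _

theorem dF_le_mul_norm_sub {b : ℝ} (hFcont : Continuous F) (hF0 : ∀ x z, 0 ≤ F (x, z))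
    (hFb : ∀ x z, F (x, z) ≤ b * ‖z‖) (p q : EuclideanSpace ℝ (Fin n)) :
    dF n F p q ≤ b * ‖q - p‖ := by
  set seg : ℝ → EuclideanSpace ℝ (Fin n) := fun s => p + s • (q - p)
  have hseg : ContDiff ℝ 1 seg := contDiff_const.add (contDiff_id.smul contDiff_const)
  have hderiv : ∀ s, deriv seg s = q - p := fun s => by
    have h := ((hasDerivAt_id s).smul_const (q - p)).const_add p
    rw [one_smul] at h
    exact h.deriv
  have hlen := dF_le_integral hF0 hseg
  simp only [seg, zero_smul, add_zero, one_smul, add_sub_cancel] at hlen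
  calc dF n F p q ≤ ∫ s in (0 : ℝ)..1, F (seg s, deriv seg s) := hlen
    _ ≤ ∫ _ in (0 : ℝ)..1, b * ‖q - p‖ := by
      have hint : Continuous fun s => F (seg s, deriv seg s) :=
        hFcont.comp (hseg.continuous.prodMk (hseg.continuous_deriv le_rfl))
      exact intervalIntegral.integral_mono_on zero_le_one (hint.intervalIntegrable _ _)
        intervalIntegrable_const fun s _ => hderiv s ▸ hFb _ _
    _ = b * ‖q - p‖ := by simp

end dF

theorem stmt_9_general (n : ℕ) (a b : ℝ) (ha : 0 < a)
    (F : EuclideanSpace ℝ (Fin n) × EuclideanSpace ℝ (Fin n) → ℝ)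
    (hFcont : Continuous F)
    (hFbd : ∀ x z : EuclideanSpace ℝ (Fin n), a * ‖z‖ ≤ F (x, z) ∧ F (x, z) ≤ b * ‖z‖)
    (x₁ x₂ : EuclideanSpace ℝ (Fin n))
    (γ : ℝ → EuclideanSpace ℝ (Fin n)) (hγ : ContDiff ℝ 1 γ)
    (hγ0 : γ 0 = x₁)
    (hlen : (∫ t in (0:ℝ)..1, F (γ t, deriv γ t)) ≤ 2 * dF n F x₁ x₂) :
    ∀ t ∈ Set.Icc (0:ℝ) 1, ‖γ t - x₁‖ ≤ (2 * b / a) * ‖x₂ - x₁‖ := by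
  intro t ht
  have hF0 : ∀ x z, 0 ≤ F (x, z) := fun x z =>
    (mul_nonneg ha.le (norm_nonneg z)).trans (hFbd x z).1
  have hdF := dF_le_mul_norm_sub hFcont hF0 (fun x z => (hFbd x z).2) x₁ x₂
  have hdisp := mul_norm_sub_le_integral ha hFcont (fun x z => (hFbd x z).1) hγ ht
  rw [hγ0] at hdisp
  rw [div_mul_eq_mul_div, le_div_iff₀ ha]
  linarith

/-- Euclidean form of Lemma 3.4: a near-minimizing curve for the anisotropic length
functional stays in the ball of radius `(2b/a)‖x₂ - x₁‖` around `x₁`. -/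
theorem stmt_9 (n : ℕ) (hn : 1 ≤ n) (a b : ℝ) (ha : 0 < a) (hab : a ≤ b)
    (F : EuclideanSpace ℝ (Fin n) × EuclideanSpace ℝ (Fin n) → ℝ)
    (hFcont : Continuous F)
    (hFbd : ∀ x z : EuclideanSpace ℝ (Fin n), a * ‖z‖ ≤ F (x, z) ∧ F (x, z) ≤ b * ‖z‖)
    (x₁ x₂ : EuclideanSpace ℝ (Fin n))
    (γ : ℝ → EuclideanSpace ℝ (Fin n)) (hγ : ContDiff ℝ 1 γ)
    (hγ0 : γ 0 = x₁) (hγ1 : γ 1 = x₂)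
    (hlen : (∫ t in (0:ℝ)..1, F (γ t, deriv γ t)) ≤ 2 * dF n F x₁ x₂) :
    ∀ t ∈ Set.Icc (0:ℝ) 1, ‖γ t - x₁‖ ≤ (2 * b / a) * ‖x₂ - x₁‖ :=
  stmt_9_general n a b ha F hFcont hFbd x₁ x₂ γ hγ hγ0 hlen
end

section
/- Let n ≥ 1, 0 < a ≤ b, and L ≥ 0, and let F : ℝⁿ × ℝⁿ → ℝ be continuous such that: a‖z‖ ≤ F(x, z) ≤ b‖z‖ for all x, z; for each x the function z ↦ F(x, z) is convex and positively 1-homogeneous (F(x, λz) = λ F(x, z) for all λ ≥ 0); and |F(x, z) − F(x', z)| ≤ L‖x − x'‖‖z‖ for all x, x', z. Then there exist constants C > 0 and ρ₁ > 0, depending only on a, b, and L, such that for every ρ ∈ (0, ρ₁] and every z₁, z₂ in the closed ball of radius ρ centered at the origin, (1 − Cρ) F(0, z₂ − z₁) ≤ d_F(z₁, z₂) ≤ (1 + Cρ) F(0, z₂ − z₁). -/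
/-!
The straight segment from `z₁` to `z₂` stays in the ball of radius `ρ`, so the Lipschitz
dependence of `F` on the base point bounds its cost by `F(0, z₂ - z₁) + Lρ‖z₂ - z₁‖`, and
`a‖z₂ - z₁‖ ≤ F(0, z₂ - z₁)` turns this into `(1 + Lρ/a) F(0, z₂ - z₁)`.

Conversely, a curve `γ` of Euclidean length `ℓ` costs at least `aℓ`. If `aℓ ≥ 2bρ` this already
exceeds `F(0, z₂ - z₁) ≤ b‖z₂ - z₁‖`. Otherwise `γ` stays in the ball of radius `(1 + 2b/a)ρ`,
where freezing the base point at `0` changes the cost by at most `L(1 + 2b/a)ρℓ`, and Jensen's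
inequality for the convex function `F(0, ·)` bounds the frozen cost below by `F(0, z₂ - z₁)`.
-/

open MeasureTheory Set AffineMap

theorem one_sub_mul_le_of_le_add_mul {c f I : ℝ} (hc : 0 ≤ c) (hf : 0 ≤ f) (hI : 0 ≤ I)
    (h : f ≤ I + c * I) : (1 - c) * f ≤ I := by
  rcases le_total c 1 with hc1 | hc1
  · nlinarith [mul_le_mul_of_nonneg_left h (sub_nonneg.mpr hc1), mul_nonneg (mul_nonneg hc hc) hI]
  · nlinarith

section Curves

variable {E : Type*} [NormedAddCommGroup E] {F : E × E → ℝ} {a b L : ℝ}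

theorem abs_sub_apply_zero_le (hlip : ∀ x x' z, |F (x, z) - F (x', z)| ≤ L * ‖x - x'‖ * ‖z‖)
    (hL : 0 ≤ L) {x z : E} {R : ℝ} (hx : ‖x‖ ≤ R) : |F (x, z) - F (0, z)| ≤ L * R * ‖z‖ :=
  calc |F (x, z) - F (0, z)| ≤ L * ‖x - 0‖ * ‖z‖ := hlip x 0 z
    _ ≤ L * R * ‖z‖ := by rw [sub_zero]; gcongr

variable [NormedSpace ℝ E] {γ : ℝ → E}

noncomputable def curveLength (γ : ℝ → E) : ℝ := ∫ t in (0:ℝ)..1, ‖deriv γ t‖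

noncomputable def finslerLength (F : E × E → ℝ) (γ : ℝ → E) : ℝ :=
  ∫ t in (0:ℝ)..1, F (γ t, deriv γ t)

theorem mul_curveLength_le_finslerLength (hF : Continuous F) (hlow : ∀ x z, a * ‖z‖ ≤ F (x, z))
    (hγ : ContDiff ℝ 1 γ) : a * curveLength γ ≤ finslerLength F γ := by
  have hv := hγ.continuous_deriv le_rfl
  rw [curveLength, ← intervalIntegral.integral_const_mul]
  exact intervalIntegral.integral_mono_on zero_le_one
    ((continuous_const.mul hv.norm).intervalIntegrable _ _)
    ((hF.comp (hγ.continuous.prodMk hv)).intervalIntegrable _ _) fun t _ ↦ hlow _ _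

theorem finslerLength_lineMap_le (hF : Continuous F) (hlow : ∀ x z, a * ‖z‖ ≤ F (x, z))
    (hlip : ∀ x x' z, |F (x, z) - F (x', z)| ≤ L * ‖x - x'‖ * ‖z‖) (ha : 0 < a) (hL : 0 ≤ L)
    {z₁ z₂ : E} {ρ : ℝ} (h₁ : ‖z₁‖ ≤ ρ) (h₂ : ‖z₂‖ ≤ ρ) :
    finslerLength F (lineMap z₁ z₂) ≤ (1 + L / a * ρ) * F (0, z₂ - z₁) := by
  have hρ : 0 ≤ ρ := (norm_nonneg _).trans h₁
  have hderiv : deriv (lineMap z₁ z₂ : ℝ → E) = fun _ ↦ z₂ - z₁ :=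
    funext fun _ ↦ hasDerivAt_lineMap.deriv
  have hball : ∀ t ∈ Icc (0:ℝ) 1, ‖lineMap z₁ z₂ t‖ ≤ ρ := fun t ht ↦ by
    simpa using (convex_closedBall (0:E) ρ).lineMap_mem (by simpa using h₁) (by simpa using h₂) ht
  have hfreeze : ∀ t ∈ Icc (0:ℝ) 1,
      F (lineMap z₁ z₂ t, z₂ - z₁) ≤ F (0, z₂ - z₁) + L * ρ * ‖z₂ - z₁‖ := fun t ht ↦
    by linarith [(abs_le.mp (abs_sub_apply_zero_le (z := z₂ - z₁) hlip hL (hball t ht))).2]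
  calc finslerLength F (lineMap z₁ z₂)
      ≤ ∫ _ in (0:ℝ)..1, (F (0, z₂ - z₁) + L * ρ * ‖z₂ - z₁‖) := by
        rw [finslerLength, hderiv]
        exact intervalIntegral.integral_mono_on zero_le_one
          ((hF.comp (lineMap_continuous.prodMk continuous_const)).intervalIntegrable _ _)
          intervalIntegrable_const hfreeze
    _ = F (0, z₂ - z₁) + L / a * ρ * (a * ‖z₂ - z₁‖) := by field_simp; simp
    _ ≤ (1 + L / a * ρ) * F (0, z₂ - z₁) := by
        nlinarith [mul_le_mul_of_nonneg_left (hlow 0 (z₂ - z₁)) (by positivity : 0 ≤ L / a * ρ)]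

variable [CompleteSpace E]

theorem ContDiff.integral_deriv_eq_sub (hγ : ContDiff ℝ 1 γ) (s t : ℝ) :
    ∫ u in s..t, deriv γ u = γ t - γ s :=
  intervalIntegral.integral_deriv_eq_sub
    (fun _ _ ↦ (hγ.differentiable one_ne_zero).differentiableAt)
    ((hγ.continuous_deriv le_rfl).intervalIntegrable _ _)

theorem norm_le_norm_zero_add_curveLength (hγ : ContDiff ℝ 1 γ) {t : ℝ} (ht : t ∈ Icc (0:ℝ) 1) :
    ‖γ t‖ ≤ ‖γ 0‖ + curveLength γ := by
  have hv := (hγ.continuous_deriv le_rfl).norm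
  calc ‖γ t‖ ≤ ‖γ 0‖ + ‖γ t - γ 0‖ := norm_le_norm_add_norm_sub' _ _
    _ ≤ ‖γ 0‖ + ∫ s in (0:ℝ)..t, ‖deriv γ s‖ := by
      rw [← hγ.integral_deriv_eq_sub]
      gcongr
      exact intervalIntegral.norm_integral_le_integral_norm ht.1
    _ ≤ ‖γ 0‖ + curveLength γ := by
      gcongr
      exact intervalIntegral.integral_mono_interval le_rfl ht.1 ht.2
        (.of_forall fun _ ↦ norm_nonneg _) (hv.intervalIntegrable _ _)

theorem ConvexOn.map_sub_le_integral_comp_deriv {f : E → ℝ} (hf : ConvexOn ℝ univ f)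
    (hfc : Continuous f) (hγ : ContDiff ℝ 1 γ) :
    f (γ 1 - γ 0) ≤ ∫ t in (0:ℝ)..1, f (deriv γ t) := by
  have hv := hγ.continuous_deriv le_rfl
  have : IsProbabilityMeasure (volume.restrict (Ioc (0:ℝ) 1)) := ⟨by simp⟩
  rw [← hγ.integral_deriv_eq_sub, intervalIntegral.integral_of_le zero_le_one,
    intervalIntegral.integral_of_le zero_le_one]
  exact hf.map_integral_le hfc.continuousOn isClosed_univ (.of_forall fun _ ↦ mem_univ _)
    (hv.integrableOn_Icc.mono_set Ioc_subset_Icc_self)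
    ((hfc.comp hv).integrableOn_Icc.mono_set Ioc_subset_Icc_self)

theorem sub_mul_curveLength_le_finslerLength (hF : Continuous F)
    (hconv : ConvexOn ℝ univ fun z ↦ F (0, z))
    (hlip : ∀ x x' z, |F (x, z) - F (x', z)| ≤ L * ‖x - x'‖ * ‖z‖) (hL : 0 ≤ L)
    (hγ : ContDiff ℝ 1 γ) {R : ℝ} (hR : ∀ t ∈ Icc (0:ℝ) 1, ‖γ t‖ ≤ R) :
    F (0, γ 1 - γ 0) - L * R * curveLength γ ≤ finslerLength F γ := by
  have hv := hγ.continuous_deriv le_rfl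
  have hF0 : Continuous fun z ↦ F (0, z) := hF.comp (continuous_const.prodMk continuous_id)
  have hFγ : Continuous fun t ↦ F (γ t, deriv γ t) := hF.comp (hγ.continuous.prodMk hv)
  have hℓ : Continuous fun t ↦ L * R * ‖deriv γ t‖ := continuous_const.mul hv.norm
  have hfreeze : ∀ t ∈ Icc (0:ℝ) 1,
      F (0, deriv γ t) ≤ F (γ t, deriv γ t) + L * R * ‖deriv γ t‖ := fun t ht ↦ by
    linarith [(abs_le.mp (abs_sub_apply_zero_le (z := deriv γ t) hlip hL (hR t ht))).1]
  suffices F (0, γ 1 - γ 0) ≤ finslerLength F γ + L * R * curveLength γ by linarith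
  calc F (0, γ 1 - γ 0) ≤ ∫ t in (0:ℝ)..1, F (0, deriv γ t) :=
        hconv.map_sub_le_integral_comp_deriv hF0 hγ
    _ ≤ ∫ t in (0:ℝ)..1, (F (γ t, deriv γ t) + L * R * ‖deriv γ t‖) :=
        intervalIntegral.integral_mono_on zero_le_one ((hF0.comp hv).intervalIntegrable _ _)
          ((hFγ.add hℓ).intervalIntegrable _ _) hfreeze
    _ = finslerLength F γ + L * R * curveLength γ := by
        rw [intervalIntegral.integral_add (hFγ.intervalIntegrable _ _) (hℓ.intervalIntegrable _ _),
          intervalIntegral.integral_const_mul, finslerLength, curveLength]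

theorem one_sub_mul_le_finslerLength (hF : Continuous F)
    (hbd : ∀ x z, a * ‖z‖ ≤ F (x, z) ∧ F (x, z) ≤ b * ‖z‖)
    (hconv : ConvexOn ℝ univ fun z ↦ F (0, z))
    (hlip : ∀ x x' z, |F (x, z) - F (x', z)| ≤ L * ‖x - x'‖ * ‖z‖)
    (ha : 0 < a) (hb : 0 ≤ b) (hL : 0 ≤ L) (hγ : ContDiff ℝ 1 γ) {ρ : ℝ}
    (h₀ : ‖γ 0‖ ≤ ρ) (h₁ : ‖γ 1‖ ≤ ρ) :
    (1 - L * (a + 2 * b) / a ^ 2 * ρ) * F (0, γ 1 - γ 0) ≤ finslerLength F γ := by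
  set c := L * (a + 2 * b) / a ^ 2 * ρ
  set ℓ := curveLength γ
  set I := finslerLength F γ
  have hρ : 0 ≤ ρ := (norm_nonneg _).trans h₀
  have hc : 0 ≤ c := by positivity
  have hℓ : 0 ≤ ℓ := intervalIntegral.integral_nonneg zero_le_one fun _ _ ↦ norm_nonneg _
  have hℓI : a * ℓ ≤ I := mul_curveLength_le_finslerLength hF (fun x z ↦ (hbd x z).1) hγ
  have hI : 0 ≤ I := (mul_nonneg ha.le hℓ).trans hℓI
  have hf₀ : 0 ≤ F (0, γ 1 - γ 0) := (mul_nonneg ha.le (norm_nonneg _)).trans (hbd _ _).1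
  have hf : F (0, γ 1 - γ 0) ≤ 2 * b * ρ := calc
      F (0, γ 1 - γ 0) ≤ b * ‖γ 1 - γ 0‖ := (hbd _ _).2
      _ ≤ b * (ρ + ρ) := by gcongr; exact (norm_sub_le _ _).trans (add_le_add h₁ h₀)
      _ = 2 * b * ρ := by ring
  refine one_sub_mul_le_of_le_add_mul hc hf₀ hI ?_
  rcases le_or_gt (2 * b * ρ) (a * ℓ) with hlong | hshort
  · nlinarith [mul_nonneg hc hI]
  · have hR : ∀ t ∈ Icc (0:ℝ) 1, ‖γ t‖ ≤ (a + 2 * b) / a * ρ := fun t ht ↦ by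
      have := norm_le_norm_zero_add_curveLength hγ ht
      rw [div_mul_eq_mul_div, le_div_iff₀ ha]
      nlinarith
    have hfreeze := sub_mul_curveLength_le_finslerLength hF hconv hlip hL hγ hR
    have hcI : L * ((a + 2 * b) / a * ρ) * ℓ ≤ c * I := calc
        L * ((a + 2 * b) / a * ρ) * ℓ = c * (a * ℓ) := by simp only [c]; field_simp
        _ ≤ c * I := by gcongr
    linarith

end Curves

section Distance

variable {n : ℕ} {F : EuclideanSpace ℝ (Fin n) × EuclideanSpace ℝ (Fin n) → ℝ}
  {p q : EuclideanSpace ℝ (Fin n)}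

theorem dF_le_finslerLength (hF : ∀ x z, 0 ≤ F (x, z)) {γ : ℝ → EuclideanSpace ℝ (Fin n)}
    (hγ : ContDiff ℝ 1 γ) (h₀ : γ 0 = p) (h₁ : γ 1 = q) : dF n F p q ≤ finslerLength F γ :=
  csInf_le ⟨0, by
    rintro _ ⟨γ, -, -, -, rfl⟩
    exact intervalIntegral.integral_nonneg zero_le_one fun _ _ ↦ hF _ _⟩ ⟨γ, hγ, h₀, h₁, rfl⟩

theorem le_dF {c : ℝ} (h : ∀ γ : ℝ → EuclideanSpace ℝ (Fin n),
      ContDiff ℝ 1 γ → γ 0 = p → γ 1 = q → c ≤ finslerLength F γ) :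
    c ≤ dF n F p q :=
  le_csInf
    ⟨_, lineMap p q, contDiff_lineMap p q, lineMap_apply_zero p q, lineMap_apply_one p q, rfl⟩
    (by rintro _ ⟨γ, hγ, h₀, h₁, rfl⟩; exact h γ hγ h₀ h₁)

end Distance

/-- Euclidean content of Lemma 3.5: on balls of radius `ρ ≤ ρ₁`, the Finsler distance
`d_F` is, up to a factor `1 ± Cρ`, the frozen-coefficient integrand `F(0, z₂ - z₁)`,
with constants `C, ρ₁` depending only on `a`, `b`, `L`. -/
theorem stmt_10 (a b L : ℝ) (ha : 0 < a) (hab : a ≤ b) (hL : 0 ≤ L) :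
    ∃ C : ℝ, 0 < C ∧ ∃ ρ₁ : ℝ, 0 < ρ₁ ∧
      ∀ (n : ℕ), 1 ≤ n →
      ∀ F : EuclideanSpace ℝ (Fin n) × EuclideanSpace ℝ (Fin n) → ℝ,
        Continuous F →
        (∀ x z : EuclideanSpace ℝ (Fin n), a * ‖z‖ ≤ F (x, z) ∧ F (x, z) ≤ b * ‖z‖) →
        (∀ x : EuclideanSpace ℝ (Fin n), ConvexOn ℝ Set.univ (fun z => F (x, z))) →
        (∀ (x z : EuclideanSpace ℝ (Fin n)) (l : ℝ), 0 ≤ l → F (x, l • z) = l * F (x, z)) →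
        (∀ x x' z : EuclideanSpace ℝ (Fin n), |F (x, z) - F (x', z)| ≤ L * ‖x - x'‖ * ‖z‖) →
        ∀ ρ : ℝ, 0 < ρ → ρ ≤ ρ₁ →
        ∀ z₁ ∈ Metric.closedBall (0 : EuclideanSpace ℝ (Fin n)) ρ,
        ∀ z₂ ∈ Metric.closedBall (0 : EuclideanSpace ℝ (Fin n)) ρ,
          (1 - C * ρ) * F (0, z₂ - z₁) ≤ dF n F z₁ z₂ ∧
          dF n F z₁ z₂ ≤ (1 + C * ρ) * F (0, z₂ - z₁) := by
  have hb : 0 ≤ b := ha.le.trans hab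
  refine ⟨L * (a + 2 * b) / a ^ 2 + 1, by positivity, 1, one_pos, ?_⟩
  intro n _ F hF hbd hconv _ hlip ρ hρ _ z₁ hz₁ z₂ hz₂
  rw [mem_closedBall_zero_iff] at hz₁ hz₂
  have hf₀ : 0 ≤ F (0, z₂ - z₁) := (mul_nonneg ha.le (norm_nonneg _)).trans (hbd _ _).1
  constructor
  · refine le_dF fun γ hγ h₀ h₁ ↦ ?_
    subst h₀ h₁
    calc _ ≤ (1 - L * (a + 2 * b) / a ^ 2 * ρ) * F (0, γ 1 - γ 0) := by gcongr; linarith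
      _ ≤ _ := one_sub_mul_le_finslerLength hF hbd (hconv 0) hlip ha hb hL hγ hz₁ hz₂
  · have hLa : L / a ≤ L * (a + 2 * b) / a ^ 2 := by
      rw [div_le_div_iff₀ ha (pow_pos ha 2)]; nlinarith [mul_nonneg hL hb]
    calc dF n F z₁ z₂ ≤ finslerLength F (lineMap z₁ z₂) :=
          dF_le_finslerLength (fun x z ↦ (mul_nonneg ha.le (norm_nonneg _)).trans (hbd x z).1)
            (contDiff_lineMap _ _) (lineMap_apply_zero _ _) (lineMap_apply_one _ _)
      _ ≤ (1 + L / a * ρ) * F (0, z₂ - z₁) :=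
          finslerLength_lineMap_le hF (fun x z ↦ (hbd x z).1) hlip ha hL hz₁ hz₂
      _ ≤ _ := by gcongr; linarith
end

section
/- Let n ≥ 1, 0 < m ≤ M, and ε ≥ 0. Let F₁, F₂ : ℝⁿ → ℝ be positively 1-homogeneous functions with m‖ν‖ ≤ F_i(ν) ≤ M‖ν‖ for all ν ∈ ℝⁿ and i = 1, 2, and suppose |F₁(ν) − F₂(ν)| ≤ ε‖ν‖ for all ν. Then the dual functions satisfy |F₁_*(z) − F₂_*(z)| ≤ (ε/m²)‖z‖ for all z ∈ ℝⁿ. -/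
/-- The dual function `F_*(z) = sup{⟨z, ν⟩ : F(ν) ≤ 1}` of an integrand `F : ℝⁿ → ℝ`. -/
noncomputable def dualFn (n : ℕ) (F : EuclideanSpace ℝ (Fin n) → ℝ)
    (z : EuclideanSpace ℝ (Fin n)) : ℝ :=
  sSup { r : ℝ | ∃ ν : EuclideanSpace ℝ (Fin n), F ν ≤ 1 ∧ r = (inner ℝ z ν : ℝ) }

/-!
By homogeneity, rescaling `ν` to `F₂(ν)⁻¹ ν` gives `⟨z, ν⟩ ≤ F₂(ν) F₂_*(z)`. For `F₁(ν) ≤ 1`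
we have `‖ν‖ ≤ 1/m`, hence `F₂(ν) ≤ 1 + ε/m`, and `0 ≤ F₂_*(z) ≤ ‖z‖/m`, so
`⟨z, ν⟩ ≤ F₂_*(z) + (ε/m²)‖z‖`. Taking the supremum and swapping the roles of `F₁`, `F₂`
gives the claim.
-/

open scoped RealInnerProductSpace

section

variable {E : Type*} {F : E → ℝ}

lemma apply_zero_of_homogeneous [AddCommGroup E] [Module ℝ E]
    (hhom : ∀ l : ℝ, 0 ≤ l → ∀ ν, F (l • ν) = l * F ν) : F 0 = 0 := by
  simpa using hhom 0 le_rfl 0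

lemma norm_le_inv_of_le_one [SeminormedAddCommGroup E] {m : ℝ} (hm : 0 < m)
    (hF : ∀ ν, m * ‖ν‖ ≤ F ν) {ν : E} (hν : F ν ≤ 1) : ‖ν‖ ≤ m⁻¹ := by
  rw [← one_div, le_div_iff₀' hm]
  exact (hF ν).trans hν

end

namespace dualFn

variable {n : ℕ} {F : EuclideanSpace ℝ (Fin n) → ℝ} {m : ℝ}

lemma inner_le (hm : 0 < m) (hF : ∀ ν, m * ‖ν‖ ≤ F ν)
    (z : EuclideanSpace ℝ (Fin n)) {ν : EuclideanSpace ℝ (Fin n)} (hν : F ν ≤ 1) :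
    ⟪z, ν⟫ ≤ dualFn n F z := by
  refine le_csSup ⟨‖z‖ * m⁻¹, ?_⟩ ⟨ν, hν, rfl⟩
  rintro _ ⟨μ, hμ, rfl⟩
  calc ⟪z, μ⟫ ≤ ‖z‖ * ‖μ‖ := real_inner_le_norm z μ
    _ ≤ ‖z‖ * m⁻¹ := by gcongr; exact norm_le_inv_of_le_one hm hF hμ

lemma le_of_forall_inner_le {z : EuclideanSpace ℝ (Fin n)} {a : ℝ}
    (h : ∀ ν, F ν ≤ 1 → ⟪z, ν⟫ ≤ a) (ha : 0 ≤ a) : dualFn n F z ≤ a :=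
  Real.sSup_le (by rintro _ ⟨ν, hν, rfl⟩; exact h ν hν) ha

lemma le_norm_div (hm : 0 < m) (hF : ∀ ν, m * ‖ν‖ ≤ F ν) (z : EuclideanSpace ℝ (Fin n)) :
    dualFn n F z ≤ ‖z‖ / m := by
  refine le_of_forall_inner_le (fun ν hν => ?_) (by positivity)
  calc ⟪z, ν⟫ ≤ ‖z‖ * ‖ν‖ := real_inner_le_norm z ν
    _ ≤ ‖z‖ * m⁻¹ := by gcongr; exact norm_le_inv_of_le_one hm hF hν
    _ = ‖z‖ / m := (div_eq_mul_inv _ _).symm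

lemma nonneg (hhom : ∀ l : ℝ, 0 ≤ l → ∀ ν, F (l • ν) = l * F ν) (hm : 0 < m)
    (hF : ∀ ν, m * ‖ν‖ ≤ F ν) (z : EuclideanSpace ℝ (Fin n)) : 0 ≤ dualFn n F z := by
  simpa using inner_le hm hF z (ν := 0) (by simp [apply_zero_of_homogeneous hhom])

lemma inner_le_mul (hhom : ∀ l : ℝ, 0 ≤ l → ∀ ν, F (l • ν) = l * F ν) (hm : 0 < m)
    (hF : ∀ ν, m * ‖ν‖ ≤ F ν) (z ν : EuclideanSpace ℝ (Fin n)) :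
    ⟪z, ν⟫ ≤ F ν * dualFn n F z := by
  rcases eq_or_ne ν 0 with rfl | hν
  · simp [apply_zero_of_homogeneous hhom]
  have hpos : 0 < F ν := (mul_pos hm (norm_pos_iff.mpr hν)).trans_le (hF ν)
  have hunit : F ((F ν)⁻¹ • ν) ≤ 1 := by
    rw [hhom _ (inv_nonneg.mpr hpos.le), inv_mul_cancel₀ hpos.ne']
  have := inner_le hm hF z hunit
  rwa [real_inner_smul_right, inv_mul_le_iff₀ hpos] at this

lemma le_add_of_le_add_norm {F₁ F₂ : EuclideanSpace ℝ (Fin n) → ℝ} {ε : ℝ}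
    (hm : 0 < m) (hε : 0 ≤ ε)
    (hhom₂ : ∀ l : ℝ, 0 ≤ l → ∀ ν, F₂ (l • ν) = l * F₂ ν)
    (hF₁ : ∀ ν, m * ‖ν‖ ≤ F₁ ν) (hF₂ : ∀ ν, m * ‖ν‖ ≤ F₂ ν)
    (hclose : ∀ ν, F₂ ν ≤ F₁ ν + ε * ‖ν‖) (z : EuclideanSpace ℝ (Fin n)) :
    dualFn n F₁ z ≤ dualFn n F₂ z + ε / m ^ 2 * ‖z‖ := by
  have hD := nonneg hhom₂ hm hF₂ z
  refine le_of_forall_inner_le (fun ν hν => ?_) (by positivity)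
  have hF₂ν : F₂ ν ≤ 1 + ε / m :=
    calc F₂ ν ≤ F₁ ν + ε * ‖ν‖ := hclose ν
      _ ≤ 1 + ε * m⁻¹ := by gcongr; exact norm_le_inv_of_le_one hm hF₁ hν
      _ = 1 + ε / m := by rw [div_eq_mul_inv]
  calc ⟪z, ν⟫ ≤ F₂ ν * dualFn n F₂ z := inner_le_mul hhom₂ hm hF₂ z ν
    _ ≤ (1 + ε / m) * dualFn n F₂ z := by gcongr
    _ ≤ dualFn n F₂ z + ε / m * (‖z‖ / m) := by
      rw [add_mul, one_mul]; gcongr; exact le_norm_div hm hF₂ z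
    _ = dualFn n F₂ z + ε / m ^ 2 * ‖z‖ := by ring

end dualFn

theorem stmt_12_general (n : ℕ) (m M ε : ℝ) (hm : 0 < m) (hε : 0 ≤ ε)
    (F₁ F₂ : EuclideanSpace ℝ (Fin n) → ℝ)
    (hhom₁ : ∀ (l : ℝ), 0 ≤ l → ∀ ν, F₁ (l • ν) = l * F₁ ν)
    (hhom₂ : ∀ (l : ℝ), 0 ≤ l → ∀ ν, F₂ (l • ν) = l * F₂ ν)
    (hbd₁ : ∀ ν : EuclideanSpace ℝ (Fin n), m * ‖ν‖ ≤ F₁ ν ∧ F₁ ν ≤ M * ‖ν‖)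
    (hbd₂ : ∀ ν : EuclideanSpace ℝ (Fin n), m * ‖ν‖ ≤ F₂ ν ∧ F₂ ν ≤ M * ‖ν‖)
    (hclose : ∀ ν : EuclideanSpace ℝ (Fin n), |F₁ ν - F₂ ν| ≤ ε * ‖ν‖) :
    ∀ z : EuclideanSpace ℝ (Fin n),
      |dualFn n F₁ z - dualFn n F₂ z| ≤ (ε / m ^ 2) * ‖z‖ := by
  intro z
  have hclose₁₂ (ν) : F₁ ν ≤ F₂ ν + ε * ‖ν‖ :=
    sub_le_iff_le_add'.mp (abs_sub_le_iff.mp (hclose ν)).1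
  have hclose₂₁ (ν) : F₂ ν ≤ F₁ ν + ε * ‖ν‖ :=
    sub_le_iff_le_add'.mp (abs_sub_le_iff.mp (hclose ν)).2
  have h₁₂ := dualFn.le_add_of_le_add_norm hm hε hhom₂ (fun ν => (hbd₁ ν).1)
    (fun ν => (hbd₂ ν).1) hclose₂₁ z
  have h₂₁ := dualFn.le_add_of_le_add_norm hm hε hhom₁ (fun ν => (hbd₂ ν).1)
    (fun ν => (hbd₁ ν).1) hclose₁₂ z
  rw [abs_sub_le_iff]
  constructor <;> linarith

/-- Euclidean core of Lemma 3.3: if two positively 1-homogeneous integrands, comparable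
to the norm with constants `m ≤ M`, are `ε`-close, then their duals are `ε/m²`-close. -/
theorem stmt_12 (n : ℕ) (hn : 1 ≤ n) (m M ε : ℝ) (hm : 0 < m) (hmM : m ≤ M) (hε : 0 ≤ ε)
    (F₁ F₂ : EuclideanSpace ℝ (Fin n) → ℝ)
    (hhom₁ : ∀ (l : ℝ), 0 ≤ l → ∀ ν, F₁ (l • ν) = l * F₁ ν)
    (hhom₂ : ∀ (l : ℝ), 0 ≤ l → ∀ ν, F₂ (l • ν) = l * F₂ ν)
    (hbd₁ : ∀ ν : EuclideanSpace ℝ (Fin n), m * ‖ν‖ ≤ F₁ ν ∧ F₁ ν ≤ M * ‖ν‖)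
    (hbd₂ : ∀ ν : EuclideanSpace ℝ (Fin n), m * ‖ν‖ ≤ F₂ ν ∧ F₂ ν ≤ M * ‖ν‖)
    (hclose : ∀ ν : EuclideanSpace ℝ (Fin n), |F₁ ν - F₂ ν| ≤ ε * ‖ν‖) :
    ∀ z : EuclideanSpace ℝ (Fin n),
      |dualFn n F₁ z - dualFn n F₂ z| ≤ (ε / m ^ 2) * ‖z‖ :=
  stmt_12_general n m M ε hm hε F₁ F₂ hhom₁ hhom₂ hbd₁ hbd₂ hclose
end
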